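/- arXiv:2503.19419 — 3 statements merged into one kernel-verified Lean document; each statement's English description precedes it below -/
import Mathlib

section
/- Let μ be a probability measure on Ω with full support, α a probability distribution on subsets of V, and P_α(σ,η) = Σ_{A⊆V} α_A μ_A^σ(η) the block dynamics kernel. If μ satisfies the α-entropy factorization with constant C_α, i.e. γ(α) Ent_μ(f) ≤ C_α Σ_A α_A μ(Ent_A f) for all f ≥ 0 where γ(α) = min_i Σ_{A∋i} α_A, then Ent_μ(P_α f) ≤ (1 − γ(α)/C_α) Ent_μ(f) for all f ≥ 0. -/
open Finset Matrix
open scoped Classical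

noncomputable section

variable {V : Type*} [Fintype V] {q : ℕ}

/-- Entropy of a nonnegative function `f` with respect to the weights `μ`:
`Ent_μ f = μ(f log f) - μ(f) log μ(f)`. -/
def ent {X : Type*} [Fintype X] (μ f : X → ℝ) : ℝ :=
  (∑ x, μ x * (f x * Real.log (f x))) - (∑ x, μ x * f x) * Real.log (∑ x, μ x * f x)

/-- The conditional measure `μ_A^τ`: `μ` conditioned on agreeing with `τ` outside `A`. -/
def condMeas (μ : (V → Fin q) → ℝ) (A : Finset V) (τ : V → Fin q) :
    (V → Fin q) → ℝ :=
  fun σ => (if ∀ i ∉ A, σ i = τ i then μ σ else 0) /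
    (∑ σ', if ∀ i ∉ A, σ' i = τ i then μ σ' else 0)

/-- Conditional expectation `μ_A f : τ ↦ μ_A^τ(f)`. -/
def condExp (μ : (V → Fin q) → ℝ) (A : Finset V) (f : (V → Fin q) → ℝ) :
    (V → Fin q) → ℝ :=
  fun τ => ∑ σ, condMeas μ A τ σ * f σ

/-- The conditional entropy `Ent_A f : τ ↦ Ent_{μ_A^τ} f`. -/
def entA (μ : (V → Fin q) → ℝ) (A : Finset V) (f : (V → Fin q) → ℝ) :
    (V → Fin q) → ℝ :=
  fun τ => ent (condMeas μ A τ) f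

/-- Minimum covering probability `γ(α) = min_i Σ_{A ∋ i} α_A`. -/
def gam [Nonempty V] (α : Finset V → ℝ) : ℝ :=
  ⨅ i : V, ∑ A ∈ univ.filter (fun A => i ∈ A), α A

def Zfun (μ : (V → Fin q) → ℝ) (A : Finset V) (τ : V → Fin q) : ℝ :=
  ∑ σ', if ∀ i ∉ A, σ' i = τ i then μ σ' else 0

lemma Zfun_pos (μ : (V → Fin q) → ℝ) (A : Finset V) (hμ : ∀ σ, 0 < μ σ)
    (τ : V → Fin q) : 0 < Zfun μ A τ := by
  refine Finset.sum_pos' (fun σ' _ => ?_) ⟨τ, mem_univ τ, ?_⟩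
  · split
    · exact (hμ σ').le
    · exact le_rfl
  · rw [if_pos (fun i _ => rfl)]; exact hμ τ

lemma Zfun_congr (μ : (V → Fin q) → ℝ) (A : Finset V) {σ τ : V → Fin q}
    (h : ∀ i ∉ A, σ i = τ i) : Zfun μ A σ = Zfun μ A τ := by
  refine Finset.sum_congr rfl fun σ' _ => ?_
  have : (∀ i ∉ A, σ' i = σ i) ↔ (∀ i ∉ A, σ' i = τ i) := by
    constructor <;> intro h' i hi
    · exact (h' i hi).trans (h i hi)
    · exact (h' i hi).trans (h i hi).symm
  rw [if_congr this rfl rfl]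

lemma condMeas_nonneg (μ : (V → Fin q) → ℝ) (A : Finset V) (hμ : ∀ σ, 0 < μ σ)
    (τ σ : V → Fin q) : 0 ≤ condMeas μ A τ σ := by
  apply div_nonneg
  · split
    · exact (hμ σ).le
    · exact le_rfl
  · exact (Zfun_pos μ A hμ τ).le

lemma sum_mu_condMeas (μ : (V → Fin q) → ℝ) (A : Finset V) (hμ : ∀ σ, 0 < μ σ)
    (σ : V → Fin q) : ∑ τ, μ τ * condMeas μ A τ σ = μ σ := by
  have hZ : Zfun μ A σ ≠ 0 := (Zfun_pos μ A hμ σ).ne'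
  calc ∑ τ, μ τ * condMeas μ A τ σ
      = ∑ τ, (if ∀ i ∉ A, σ i = τ i then μ τ else 0) * (μ σ / Zfun μ A σ) := by
        refine Finset.sum_congr rfl fun τ _ => ?_
        unfold condMeas
        by_cases h : ∀ i ∉ A, σ i = τ i
        · rw [if_pos h, if_pos h]
          rw [show (∑ σ', if ∀ i ∉ A, σ' i = τ i then μ σ' else 0) = Zfun μ A σ from
            (Zfun_congr μ A h).symm]
        · rw [if_neg h, if_neg h, zero_div, mul_zero, zero_mul]
    _ = (∑ τ, if ∀ i ∉ A, σ i = τ i then μ τ else 0) * (μ σ / Zfun μ A σ) := by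
        rw [Finset.sum_mul]
    _ = Zfun μ A σ * (μ σ / Zfun μ A σ) := by
        congr 1
        refine Finset.sum_congr rfl fun τ _ => ?_
        have : (∀ i ∉ A, σ i = τ i) ↔ (∀ i ∉ A, τ i = σ i) := by
          constructor <;> intro h' i hi <;> exact (h' i hi).symm
        rw [if_congr this rfl rfl]
    _ = μ σ := by field_simp

lemma tower (μ : (V → Fin q) → ℝ) (A : Finset V) (hμ : ∀ σ, 0 < μ σ)
    (h : (V → Fin q) → ℝ) :
    ∑ τ, μ τ * condExp μ A h τ = ∑ σ, μ σ * h σ := by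
  simp only [condExp, Finset.mul_sum]
  rw [Finset.sum_comm]
  refine Finset.sum_congr rfl fun σ _ => ?_
  calc ∑ τ, μ τ * (condMeas μ A τ σ * h σ)
      = (∑ τ, μ τ * condMeas μ A τ σ) * h σ := by
        rw [Finset.sum_mul]; exact Finset.sum_congr rfl fun τ _ => by ring
    _ = μ σ * h σ := by rw [sum_mu_condMeas μ A hμ σ]

lemma decomp (μ : (V → Fin q) → ℝ) (A : Finset V) (hμ : ∀ σ, 0 < μ σ)
    (f : (V → Fin q) → ℝ) :
    (∑ τ, μ τ * entA μ A f τ) + ent μ (condExp μ A f) = ent μ f := by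
  have h1 := tower μ A hμ f
  have h2 := tower μ A hμ (fun σ => f σ * Real.log (f σ))
  simp only [condExp] at h1 h2 ⊢
  simp only [entA, ent, condExp, mul_sub, Finset.sum_sub_distrib]
  rw [h1, h2]
  ring

lemma ent_convex {X : Type*} [Fintype X] {I : Type*} [Fintype I] (μ : X → ℝ)
    (hμ : ∀ x, 0 ≤ μ x) (α : I → ℝ) (hα : ∀ A, 0 ≤ α A) (hα1 : ∑ A : I, α A = 1)
    (g : I → X → ℝ) (hg : ∀ A x, 0 ≤ g A x) (m : ℝ)
    (hm : ∀ A, ∑ x, μ x * g A x = m) :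
    ent μ (fun x => ∑ A, α A * g A x) ≤ ∑ A, α A * ent μ (g A) := by
  have hmean : ∑ x, μ x * ∑ A, α A * g A x = m := by
    calc ∑ x, μ x * ∑ A, α A * g A x
        = ∑ A, α A * ∑ x, μ x * g A x := by
          simp only [Finset.mul_sum]
          rw [Finset.sum_comm]
          exact Finset.sum_congr rfl fun A _ => Finset.sum_congr rfl fun x _ => by ring
      _ = ∑ A, α A * m := by exact Finset.sum_congr rfl fun A _ => by rw [hm A]
      _ = m := by rw [← Finset.sum_mul, hα1, one_mul]
  have jensen : ∀ x, (∑ A, α A * g A x) * Real.log (∑ A, α A * g A x) ≤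
      ∑ A, α A * (g A x * Real.log (g A x)) := by
    intro x
    have := Real.convexOn_mul_log.map_sum_le (t := Finset.univ) (w := α)
      (p := fun A => g A x) (fun A _ => hα A) hα1 (fun A _ => hg A x)
    simpa [smul_eq_mul] using this
  calc ent μ (fun x => ∑ A, α A * g A x)
      = (∑ x, μ x * ((∑ A, α A * g A x) * Real.log (∑ A, α A * g A x))) - m * Real.log m := by
        rw [ent, hmean]
    _ ≤ (∑ x, μ x * ∑ A, α A * (g A x * Real.log (g A x))) - m * Real.log m := by
        have : ∀ x ∈ Finset.univ (α := X),
            μ x * ((∑ A, α A * g A x) * Real.log (∑ A, α A * g A x)) ≤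
            μ x * ∑ A, α A * (g A x * Real.log (g A x)) :=
          fun x _ => mul_le_mul_of_nonneg_left (jensen x) (hμ x)
        exact sub_le_sub_right (Finset.sum_le_sum this) _
    _ = ∑ A, α A * ((∑ x, μ x * (g A x * Real.log (g A x))) - m * Real.log m) := by
        simp only [mul_sub, Finset.sum_sub_distrib, ← Finset.sum_mul, hα1, one_mul]
        congr 1
        simp only [Finset.mul_sum]
        rw [Finset.sum_comm]
        exact Finset.sum_congr rfl fun A _ => Finset.sum_congr rfl fun x _ => by ring
    _ = ∑ A, α A * ent μ (g A) := by
        refine Finset.sum_congr rfl fun A _ => ?_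
        rw [ent, hm A]

/-- If `μ` satisfies the `α`-entropy factorization with constant `C_α`, then the
`α`-weighted block dynamics `P_α f = Σ_A α_A μ_A f` contracts entropy at rate
`γ(α)/C_α`. -/
theorem blockDynamicsEntropyContraction [Nonempty V]
    (μ : (V → Fin q) → ℝ) (α : Finset V → ℝ) (Cα : ℝ)
    (hμ : ∀ σ, 0 < μ σ) (hμ1 : ∑ σ, μ σ = 1)
    (hα : ∀ A, 0 ≤ α A) (hα1 : ∑ A : Finset V, α A = 1) (hC : 0 < Cα)
    (hfact : ∀ f : (V → Fin q) → ℝ, (∀ σ, 0 ≤ f σ) →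
      gam α * ent μ f ≤ Cα * ∑ A : Finset V, α A * ∑ τ, μ τ * entA μ A f τ)
    (f : (V → Fin q) → ℝ) (hf : ∀ σ, 0 ≤ f σ) :
    ent μ (fun σ => ∑ A : Finset V, α A * condExp μ A f σ) ≤
      (1 - gam α / Cα) * ent μ f := by
  have hcnn : ∀ (A : Finset V) σ, 0 ≤ condExp μ A f σ := fun A σ =>
    Finset.sum_nonneg fun σ' _ => mul_nonneg (condMeas_nonneg μ A hμ σ σ') (hf σ')
  have hmean : ∀ A : Finset V, ∑ τ, μ τ * condExp μ A f τ = ∑ σ, μ σ * f σ :=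
    fun A => tower μ A hμ f
  have hconv := ent_convex μ (fun x => (hμ x).le) α hα hα1
    (fun A => condExp μ A f) (fun A σ => hcnn A σ) (∑ σ, μ σ * f σ) hmean
  have hdec : ∀ A : Finset V, ent μ (condExp μ A f) = ent μ f - ∑ τ, μ τ * entA μ A f τ := by
    intro A; have := decomp μ A hμ f; linarith
  have hsum : ∑ A : Finset V, α A * ent μ (condExp μ A f)
      = ent μ f - ∑ A : Finset V, α A * ∑ τ, μ τ * entA μ A f τ := by
    simp only [hdec, mul_sub, Finset.sum_sub_distrib, ← Finset.sum_mul, hα1, one_mul]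
  have hfac := hfact f hf
  have hlb : gam α / Cα * ent μ f ≤ ∑ A : Finset V, α A * ∑ τ, μ τ * entA μ A f τ := by
    rw [div_mul_eq_mul_div, div_le_iff₀ hC]
    linarith
  calc ent μ (fun σ => ∑ A : Finset V, α A * condExp μ A f σ)
      ≤ ∑ A : Finset V, α A * ent μ (condExp μ A f) := hconv
    _ = ent μ f - ∑ A : Finset V, α A * ∑ τ, μ τ * entA μ A f τ := hsum
    _ ≤ ent μ f - gam α / Cα * ent μ f := by linarith
    _ = (1 - gam α / Cα) * ent μ f := by ring
end
end

section
/- If μ = ⊗_{i=1}^n μ_i is a product probability measure on Ω = [q]^V (V = [n]) and α is any probability distribution over subsets of V, then for all f ≥ 0: γ(α) Ent_μ(f) ≤ Σ_{A⊆V} α_A μ(Ent_A f), where γ(α) = min_i Σ_{A∋i} α_A. That is, product measures satisfy the Shearer entropy inequality with constant 1. -/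
open Finset Matrix
open scoped Classical

noncomputable section

variable {V : Type*} [Fintype V] {q : ℕ}

/-!
Fix an order on the sites and let `μ_B` average out the coordinates in `B`. For a product
measure, conditioning on the coordinates outside `A` is the same as resampling those in `A`,
so `μ_B μ_A = μ_{A ∪ B}` and entropy obeys the chain rule
`Ent_{A ∪ B} = μ_B Ent_A + Ent_B μ_A`. Put `e_i = μ(Ent_{i} (μ_{<i} f))`. Running the chain
rule along the order gives `Ent_μ f = ∑ i, e_i`; running it along the elements of an arbitrary
`A` gives `μ(Ent_A f) ≥ ∑ i ∈ A, e_i`, because at site `i` it meets `μ_C f` with `C ⊆ {j < i}`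
instead of `μ_{<i} f = μ_{C'} μ_C f`, and the extra average `μ_{C'}` can only lower
`μ(Ent_{i} ·)` by convexity of entropy. Weighting by `α_A` and summing,
`γ(α) ∑ i, e_i ≤ ∑ i, (∑ A ∋ i, α_A) e_i = ∑ A, α_A ∑ i ∈ A, e_i ≤ ∑ A, α_A μ(Ent_A f)`.
-/

open Real InformationTheory

lemma sum_sum_filter_mem_mul {ι R : Type*} [Fintype ι] [CommSemiring R] (α : Finset ι → R)
    (e : ι → R) :
    ∑ i, (∑ A ∈ univ.filter (fun A => i ∈ A), α A) * e i = ∑ A, α A * ∑ i ∈ A, e i := by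
  simp only [sum_mul, mul_sum]
  exact sum_comm' (by simp)

section Entropy

variable {X ι : Type*} [Fintype X] [Fintype ι]

lemma ent_nonneg {w f : X → ℝ} (hw : ∀ x, 0 ≤ w x) (hw1 : ∑ x, w x = 1) (hf : ∀ x, 0 ≤ f x) :
    0 ≤ ent w f := by
  have := convexOn_mul_log.map_sum_le (t := univ) (fun x _ => hw x) hw1 (fun x _ => hf x)
  simp only [smul_eq_mul] at this
  exact sub_nonneg.2 this

/-- The Bregman divergence of `x ↦ x log x`. -/
def bregman (x y : ℝ) : ℝ := x * log x - x * log y - x + y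

lemma bregman_eq_mul_klFun {x y : ℝ} (hx : 0 ≤ x) (hy : 0 ≤ y) (h0 : y = 0 → x = 0) :
    bregman x y = y * klFun (x / y) := by
  rcases hy.eq_or_lt with rfl | hy
  · simp [bregman, h0 rfl]
  rcases hx.eq_or_lt with rfl | hx
  · simp [bregman, klFun]
  rw [bregman, klFun, log_div hx.ne' hy.ne']
  field_simp
  ring

lemma bregman_nonneg {x y : ℝ} (hx : 0 ≤ x) (hy : 0 ≤ y) (h0 : y = 0 → x = 0) :
    0 ≤ bregman x y := by
  rw [bregman_eq_mul_klFun hx hy h0]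
  exact mul_nonneg hy (klFun_nonneg (div_nonneg hx hy))

/-- `bregman x y = y * klFun (x / y)` is the perspective of the convex function `klFun`. -/
lemma bregman_sum_le (p x y : ι → ℝ) (hp : ∀ i, 0 ≤ p i) (hx : ∀ i, 0 ≤ x i) (hy : ∀ i, 0 ≤ y i)
    (h0 : ∀ i, y i = 0 → x i = 0) :
    bregman (∑ i, p i * x i) (∑ i, p i * y i) ≤ ∑ i, p i * bregman (x i) (y i) := by
  have hpy : ∀ i, 0 ≤ p i * y i := fun i => mul_nonneg (hp i) (hy i)
  set Y := ∑ i, p i * y i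
  rcases (sum_nonneg fun i _ => hpy i : 0 ≤ Y).eq_or_lt with hY | hY
  · have hpx : ∀ i, p i * x i = 0 := fun i => by
      rcases mul_eq_zero.1 ((sum_eq_zero_iff_of_nonneg fun i _ => hpy i).1 hY.symm i (mem_univ i))
        with h | h
      · simp [h]
      · simp [h0 i h]
    have h00 : bregman 0 0 = 0 := by simp [bregman]
    rw [sum_congr rfl fun i _ => hpx i, sum_const_zero, show Y = 0 from hY.symm, h00]
    exact sum_nonneg fun i _ => mul_nonneg (hp i) (bregman_nonneg (hx i) (hy i) (h0 i))
  have hY0 : Y ≠ 0 := hY.ne'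
  have hpx : ∀ i, p i * x i = Y * (p i * y i / Y * (x i / y i)) := fun i => by
    rcases (hy i).eq_or_lt with h | h
    · simp [h0 i h.symm]
    · field_simp
  have hjensen := convexOn_klFun.map_sum_le (t := univ) (w := fun i => p i * y i / Y)
    (p := fun i => x i / y i) (fun i _ => div_nonneg (hpy i) hY.le)
    (by rw [← sum_div, div_self hY0]) (fun i _ => div_nonneg (hx i) (hy i))
  simp only [smul_eq_mul] at hjensen
  rw [bregman_eq_mul_klFun (sum_nonneg fun i _ => mul_nonneg (hp i) (hx i)) hY.le
    (absurd · hY0), sum_congr rfl fun i _ => hpx i, ← mul_sum, mul_div_cancel_left₀ _ hY0]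
  calc Y * klFun (∑ i, p i * y i / Y * (x i / y i))
      ≤ Y * ∑ i, p i * y i / Y * klFun (x i / y i) := mul_le_mul_of_nonneg_left hjensen hY.le
    _ = ∑ i, p i * bregman (x i) (y i) := by
      rw [mul_sum]
      refine sum_congr rfl fun i _ => ?_
      rw [bregman_eq_mul_klFun (hx i) (hy i) (h0 i)]
      field_simp

lemma ent_eq_sum_bregman (w f : X → ℝ) (hw1 : ∑ x, w x = 1) :
    ent w f = ∑ x, w x * bregman (f x) (∑ x, w x * f x) := by
  set m := ∑ x, w x * f x
  have hterm : ∀ x, w x * bregman (f x) m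
      = w x * (f x * log (f x)) - w x * f x * log m - w x * f x + w x * m := fun x => by
    rw [bregman]; ring
  rw [sum_congr rfl fun x _ => hterm x, sum_add_distrib, sum_sub_distrib, sum_sub_distrib,
    ← sum_mul, ← sum_mul, hw1, ent]
  ring

lemma ent_sum_le {w : X → ℝ} (hw : ∀ x, 0 ≤ w x) (hw1 : ∑ x, w x = 1) {p : ι → ℝ}
    (hp : ∀ z, 0 ≤ p z) {g : ι → X → ℝ} (hg : ∀ z x, 0 ≤ g z x) :
    ent w (fun x => ∑ z, p z * g z x) ≤ ∑ z, p z * ent w (g z) := by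
  set m := fun z => ∑ x, w x * g z x
  have hmean : ∑ x, w x * ∑ z, p z * g z x = ∑ z, p z * m z := by
    simp only [m, mul_sum]
    rw [sum_comm]
    exact sum_congr rfl fun z _ => sum_congr rfl fun x _ => by ring
  have hrhs : ∑ z, p z * ent w (g z) = ∑ x, w x * ∑ z, p z * bregman (g z x) (m z) := by
    simp only [ent_eq_sum_bregman w _ hw1, mul_sum]
    rw [sum_comm]
    exact sum_congr rfl fun x _ => sum_congr rfl fun z _ => by ring
  rw [ent_eq_sum_bregman w _ hw1, hmean, hrhs]
  refine sum_le_sum fun x _ => ?_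
  rcases (hw x).eq_or_lt with hwx | hwx
  · simp [← hwx]
  refine mul_le_mul_of_nonneg_left (bregman_sum_le p _ m hp (fun z => hg z x)
    (fun z => sum_nonneg fun x _ => mul_nonneg (hw x) (hg z x)) fun z hmz => ?_) hwx.le
  have := (sum_eq_zero_iff_of_nonneg fun x _ => mul_nonneg (hw x) (hg z x)).1 hmz x (mem_univ x)
  exact (mul_eq_zero.1 this).resolve_left hwx.ne'

end Entropy

section Product

variable {β : Type*}

def prodWeight (μi : V → β → ℝ) (σ : V → β) : ℝ := ∏ i, μi i (σ i)

variable {μi : V → β → ℝ}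

lemma prodWeight_nonneg (hμ : ∀ i a, 0 ≤ μi i a) (σ : V → β) : 0 ≤ prodWeight μi σ :=
  prod_nonneg fun i _ => hμ i (σ i)

lemma prodWeight_piecewise_mul (A : Finset V) (y z : V → β) :
    prodWeight μi (A.piecewise y z) * prodWeight μi (A.piecewise z y)
      = prodWeight μi y * prodWeight μi z := by
  simp only [prodWeight, ← prod_mul_distrib]
  refine prod_congr rfl fun i _ => ?_
  by_cases hi : i ∈ A <;> simp [hi, mul_comm]

variable [Fintype β]

lemma sum_prodWeight (h1 : ∀ i, ∑ a, μi i a = 1) : ∑ σ, prodWeight μi σ = 1 := by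
  simp [prodWeight, ← Fintype.prod_sum, h1]

lemma sum_prodWeight_mul_ite_piecewise_eq [DecidableEq β] (h1 : ∀ i, ∑ a, μi i a = 1)
    (A : Finset V) (τ σ : V → β) :
    ∑ y, prodWeight μi y * (if A.piecewise y τ = σ then 1 else 0)
      = ∏ i, if i ∈ A then μi i (σ i) else if τ i = σ i then 1 else 0 := by
  calc ∑ y, prodWeight μi y * (if A.piecewise y τ = σ then 1 else 0)
      = ∑ y : V → β, ∏ i, μi i (y i) * (if (if i ∈ A then y i else τ i) = σ i then 1 else 0) := by
        simp only [prodWeight, prod_mul_distrib, Fintype.prod_boole, ← funext_iff]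
        rfl
    _ = ∏ i, ∑ a, μi i a * (if (if i ∈ A then a else τ i) = σ i then 1 else 0) := by
        rw [Fintype.prod_sum]
    _ = ∏ i, if i ∈ A then μi i (σ i) else if τ i = σ i then 1 else 0 := by
        refine prod_congr rfl fun i _ => ?_
        by_cases hi : i ∈ A
        · simp [hi]
        · by_cases hτ : τ i = σ i <;> simp [hi, hτ, h1]

lemma sum_ite_prodWeight [DecidableEq β] (h1 : ∀ i, ∑ a, μi i a = 1) (A : Finset V)
    (τ : V → β) :
    (∑ σ, if ∀ i ∉ A, σ i = τ i then prodWeight μi σ else 0)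
      = ∏ i, if i ∈ A then 1 else μi i (τ i) := by
  calc (∑ σ, if ∀ i ∉ A, σ i = τ i then prodWeight μi σ else 0)
      = ∑ σ : V → β, ∏ i, μi i (σ i) * (if i ∉ A → σ i = τ i then 1 else 0) := by
        refine sum_congr rfl fun σ _ => ?_
        rw [prod_mul_distrib, Fintype.prod_boole, prodWeight, mul_ite, mul_one, mul_zero]
    _ = ∏ i, ∑ a, μi i a * (if i ∉ A → a = τ i then 1 else 0) := by
        rw [Fintype.prod_sum]
    _ = ∏ i, if i ∈ A then 1 else μi i (τ i) := by
        refine prod_congr rfl fun i _ => ?_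
        by_cases hi : i ∈ A <;> simp [hi, h1]

/-- The swap `(y, z) ↦ (A.piecewise y z, A.piecewise z y)` preserves `μ ⊗ μ`. -/
lemma sum_sum_prodWeight_piecewise (h1 : ∀ i, ∑ a, μi i a = 1) (A : Finset V)
    (G : (V → β) → ℝ) :
    ∑ y, ∑ z, prodWeight μi y * prodWeight μi z * G (A.piecewise y z)
      = ∑ x, prodWeight μi x * G x := by
  have hswap : Function.Involutive fun p : (V → β) × (V → β) =>
      (A.piecewise p.1 p.2, A.piecewise p.2 p.1) := fun p => by
    ext i <;> by_cases hi : i ∈ A <;> simp [hi]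
  calc ∑ y, ∑ z, prodWeight μi y * prodWeight μi z * G (A.piecewise y z)
      = ∑ p : (V → β) × (V → β), prodWeight μi p.1 * prodWeight μi p.2 * G p.1 := by
        rw [← Fintype.sum_prod_type']
        exact Fintype.sum_equiv (hswap.toPerm _) _ _ fun p => by
          simp only [Function.Involutive.coe_toPerm, prodWeight_piecewise_mul]
    _ = ∑ x, prodWeight μi x * G x := by
        rw [Fintype.sum_prod_type]
        refine sum_congr rfl fun x _ => ?_
        dsimp only
        rw [← sum_mul, ← mul_sum, sum_prodWeight h1, mul_one]

def prodMean (μi : V → β → ℝ) (g : (V → β) → ℝ) : ℝ := ∑ σ, prodWeight μi σ * g σ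

/-- `μ_A g` for the product measure `μ`: the coordinates in `A` are resampled. -/
def condMean (μi : V → β → ℝ) (A : Finset V) (g : (V → β) → ℝ) (τ : V → β) : ℝ :=
  ∑ y, prodWeight μi y * g (A.piecewise y τ)

def condEnt (μi : V → β → ℝ) (A : Finset V) (g : (V → β) → ℝ) (τ : V → β) : ℝ :=
  ent (prodWeight μi) fun y => g (A.piecewise y τ)

lemma condEnt_eq_condMean (A : Finset V) (g : (V → β) → ℝ) (τ : V → β) :
    condEnt μi A g τ = condMean μi A (fun σ => g σ * log (g σ)) τ
      - condMean μi A g τ * log (condMean μi A g τ) := rfl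

lemma condMean_nonneg (hμ : ∀ i a, 0 ≤ μi i a) {g : (V → β) → ℝ} (hg : ∀ σ, 0 ≤ g σ)
    (A : Finset V) (τ : V → β) : 0 ≤ condMean μi A g τ :=
  sum_nonneg fun y _ => mul_nonneg (prodWeight_nonneg hμ y) (hg _)

lemma condMean_sub (A : Finset V) (g h : (V → β) → ℝ) (τ : V → β) :
    condMean μi A (fun σ => g σ - h σ) τ = condMean μi A g τ - condMean μi A h τ := by
  simp only [condMean, mul_sub, sum_sub_distrib]

lemma prodMean_condMean (h1 : ∀ i, ∑ a, μi i a = 1) (A : Finset V) (g : (V → β) → ℝ) :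
    prodMean μi (condMean μi A g) = prodMean μi g := by
  rw [prodMean, prodMean, ← sum_sum_prodWeight_piecewise h1 A g]
  simp only [condMean, mul_sum]
  rw [sum_comm]
  exact sum_congr rfl fun y _ => sum_congr rfl fun τ _ => by ring

lemma condMean_condMean (h1 : ∀ i, ∑ a, μi i a = 1) (A B : Finset V) (g : (V → β) → ℝ)
    (τ : V → β) : condMean μi B (condMean μi A g) τ = condMean μi (A ∪ B) g τ := by
  have hpw : ∀ y z : V → β,
      A.piecewise y (B.piecewise z τ) = (A ∪ B).piecewise (A.piecewise y z) τ := fun y z => by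
    ext i; by_cases hA : i ∈ A <;> by_cases hB : i ∈ B <;> simp [hA, hB]
  rw [condMean, condMean,
    ← sum_sum_prodWeight_piecewise h1 A fun x => g ((A ∪ B).piecewise x τ)]
  simp only [condMean, mul_sum, hpw]
  rw [sum_comm]
  exact sum_congr rfl fun y _ => sum_congr rfl fun z _ => by ring

lemma condEnt_nonneg (hμ : ∀ i a, 0 ≤ μi i a) (h1 : ∀ i, ∑ a, μi i a = 1)
    {g : (V → β) → ℝ} (hg : ∀ σ, 0 ≤ g σ) (A : Finset V) (τ : V → β) : 0 ≤ condEnt μi A g τ :=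
  ent_nonneg (prodWeight_nonneg hμ) (sum_prodWeight h1) fun _ => hg _

lemma condEnt_empty (h1 : ∀ i, ∑ a, μi i a = 1) (g : (V → β) → ℝ) (τ : V → β) :
    condEnt μi ∅ g τ = 0 := by
  simp [condEnt, ent, ← sum_mul, sum_prodWeight h1]

lemma condEnt_univ (g : (V → β) → ℝ) (τ : V → β) :
    condEnt μi univ g τ = ent (prodWeight μi) g := by
  simp [condEnt]

lemma condEnt_union (h1 : ∀ i, ∑ a, μi i a = 1) (A B : Finset V) (g : (V → β) → ℝ)
    (τ : V → β) :
    condEnt μi (A ∪ B) g τ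
      = condMean μi B (condEnt μi A g) τ + condEnt μi B (condMean μi A g) τ := by
  have hA : condEnt μi A g = fun σ => condMean μi A (fun σ => g σ * log (g σ)) σ
      - condMean μi A g σ * log (condMean μi A g σ) := funext (condEnt_eq_condMean A g)
  rw [hA, condMean_sub]
  simp only [condEnt_eq_condMean, ← condMean_condMean h1 A B]
  ring

lemma condEnt_condMean_le (hμ : ∀ i a, 0 ≤ μi i a) (h1 : ∀ i, ∑ a, μi i a = 1)
    {B C : Finset V} (hBC : Disjoint B C) {g : (V → β) → ℝ} (hg : ∀ σ, 0 ≤ g σ) (τ : V → β) :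
    condEnt μi B (condMean μi C g) τ ≤ condMean μi C (condEnt μi B g) τ := by
  have hpw : ∀ y z : V → β,
      C.piecewise z (B.piecewise y τ) = B.piecewise y (C.piecewise z τ) := fun y z => by
    ext i
    by_cases hB : i ∈ B
    · simp [hB, disjoint_left.1 hBC hB]
    · by_cases hC : i ∈ C <;> simp [hB, hC]
  simp only [condEnt, condMean, hpw]
  exact ent_sum_le (prodWeight_nonneg hμ) (sum_prodWeight h1) (prodWeight_nonneg hμ)
    fun _ _ => hg _

lemma prodMean_add (f g : (V → β) → ℝ) :
    prodMean μi (fun σ => f σ + g σ) = prodMean μi f + prodMean μi g := by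
  simp only [prodMean, mul_add, sum_add_distrib]

lemma prodMean_mono (hμ : ∀ i a, 0 ≤ μi i a) {f g : (V → β) → ℝ} (hfg : ∀ σ, f σ ≤ g σ) :
    prodMean μi f ≤ prodMean μi g :=
  sum_le_sum fun σ _ => mul_le_mul_of_nonneg_left (hfg σ) (prodWeight_nonneg hμ σ)

lemma prodMean_condEnt_union (h1 : ∀ i, ∑ a, μi i a = 1) (A B : Finset V) (g : (V → β) → ℝ) :
    prodMean μi (condEnt μi (A ∪ B) g)
      = prodMean μi (condEnt μi A g) + prodMean μi (condEnt μi B (condMean μi A g)) := by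
  rw [funext (condEnt_union h1 A B g), prodMean_add, prodMean_condMean h1]

lemma prodMean_condEnt_condMean_union_le (hμ : ∀ i a, 0 ≤ μi i a) (h1 : ∀ i, ∑ a, μi i a = 1)
    {B C C' : Finset V} (hBC' : Disjoint B C') {g : (V → β) → ℝ} (hg : ∀ σ, 0 ≤ g σ) :
    prodMean μi (condEnt μi B (condMean μi (C ∪ C') g))
      ≤ prodMean μi (condEnt μi B (condMean μi C g)) := by
  rw [← funext (condMean_condMean h1 C C' g)]
  calc prodMean μi (condEnt μi B (condMean μi C' (condMean μi C g)))
      ≤ prodMean μi (condMean μi C' (condEnt μi B (condMean μi C g))) :=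
        prodMean_mono hμ (condEnt_condMean_le hμ h1 hBC' (condMean_nonneg hμ hg C))
    _ = prodMean μi (condEnt μi B (condMean μi C g)) := prodMean_condMean h1 C' _

section Chain

variable {r : V → ℕ}

def chainTerm (μi : V → β → ℝ) (r : V → ℕ) (g : (V → β) → ℝ) (i : V) : ℝ :=
  prodMean μi (condEnt μi {i} (condMean μi (univ.filter fun j => r j < r i) g))

lemma chainTerm_nonneg (hμ : ∀ i a, 0 ≤ μi i a) (h1 : ∀ i, ∑ a, μi i a = 1)
    {g : (V → β) → ℝ} (hg : ∀ σ, 0 ≤ g σ) (i : V) : 0 ≤ chainTerm μi r g i :=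
  sum_nonneg fun τ _ => mul_nonneg (prodWeight_nonneg hμ τ)
    (condEnt_nonneg hμ h1 (condMean_nonneg hμ hg _) _ τ)

lemma sum_chainTerm_le (hμ : ∀ i a, 0 ≤ μi i a) (h1 : ∀ i, ∑ a, μi i a = 1)
    (hr : Function.Injective r) {g : (V → β) → ℝ} (hg : ∀ σ, 0 ≤ g σ) (A : Finset V) :
    ∑ i ∈ A, chainTerm μi r g i ≤ prodMean μi (condEnt μi A g) := by
  induction A using Finset.induction_on_max_value r with
  | empty => simp [prodMean, condEnt_empty h1]
  | insert a s ha hle ih =>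
    have hmono : chainTerm μi r g a ≤ prodMean μi (condEnt μi {a} (condMean μi s g)) := by
      have hsub : s ⊆ univ.filter fun j => r j < r a := fun x hx =>
        mem_filter.2 ⟨mem_univ x, (hle x hx).lt_of_ne (hr.ne (ne_of_mem_of_not_mem hx ha))⟩
      rw [chainTerm, ← union_sdiff_of_subset hsub]
      exact prodMean_condEnt_condMean_union_le hμ h1 (by simp) hg
    rw [sum_insert ha, insert_eq, union_comm, prodMean_condEnt_union h1]
    linarith

lemma sum_chainTerm_of_forall_lt_mem (h1 : ∀ i, ∑ a, μi i a = 1) (hr : Function.Injective r)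
    (g : (V → β) → ℝ) {A : Finset V} (hA : ∀ i ∈ A, ∀ j, r j < r i → j ∈ A) :
    ∑ i ∈ A, chainTerm μi r g i = prodMean μi (condEnt μi A g) := by
  induction A using Finset.induction_on_max_value r with
  | empty => simp [prodMean, condEnt_empty h1]
  | insert a s ha hle ih =>
    have hs : (univ.filter fun j => r j < r a) = s := by
      ext j
      simp only [mem_filter, mem_univ, true_and]
      refine ⟨fun hj => ?_, fun hj => (hle j hj).lt_of_ne (hr.ne (ne_of_mem_of_not_mem hj ha))⟩
      exact (mem_insert.1 (hA a (mem_insert_self a s) j hj)).resolve_left (ne_of_apply_ne r hj.ne)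
    have hs_lower : ∀ i ∈ s, ∀ j, r j < r i → j ∈ s := fun i hi j hj => by
      rw [← hs]; simpa using hj.trans_le (hle i hi)
    rw [sum_insert ha, insert_eq, union_comm, prodMean_condEnt_union h1, ih hs_lower, chainTerm,
      hs, add_comm]

lemma sum_chainTerm (h1 : ∀ i, ∑ a, μi i a = 1) (hr : Function.Injective r)
    (g : (V → β) → ℝ) : ∑ i, chainTerm μi r g i = ent (prodWeight μi) g := by
  rw [sum_chainTerm_of_forall_lt_mem h1 hr g fun _ _ j _ => mem_univ j]
  simp [prodMean, condEnt_univ, ← sum_mul, sum_prodWeight h1]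

end Chain

end Product

section ConditionalMeasure

variable {μi : V → Fin q → ℝ}

lemma condMeas_prodWeight (hpos : ∀ i a, 0 < μi i a) (h1 : ∀ i, ∑ a, μi i a = 1)
    (A : Finset V) (τ σ : V → Fin q) :
    condMeas (prodWeight μi) A τ σ
      = ∑ y, prodWeight μi y * (if A.piecewise y τ = σ then 1 else 0) := by
  have hZ : (∏ i, if i ∈ A then 1 else μi i (τ i)) ≠ 0 :=
    prod_ne_zero_iff.2 fun i _ => by split_ifs <;> simp [(hpos i _).ne']
  rw [condMeas, sum_ite_prodWeight h1, sum_prodWeight_mul_ite_piecewise_eq h1]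
  split_ifs with hagree
  · rw [div_eq_iff hZ, ← prod_mul_distrib, prodWeight]
    refine prod_congr rfl fun i _ => ?_
    by_cases hi : i ∈ A <;> simp [hi, hagree i]
  · push Not at hagree
    obtain ⟨j, hj, hne⟩ := hagree
    rw [zero_div, eq_comm]
    exact prod_eq_zero (mem_univ j) (by simp [hj, Ne.symm hne])

lemma sum_condMeas_mul (hpos : ∀ i a, 0 < μi i a) (h1 : ∀ i, ∑ a, μi i a = 1)
    (A : Finset V) (τ : V → Fin q) (h : (V → Fin q) → ℝ) :
    ∑ σ, condMeas (prodWeight μi) A τ σ * h σ = condMean μi A h τ := by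
  simp only [condMeas_prodWeight hpos h1, sum_mul, condMean]
  rw [sum_comm]
  refine sum_congr rfl fun y _ => ?_
  simp

lemma entA_prodWeight (hpos : ∀ i a, 0 < μi i a) (h1 : ∀ i, ∑ a, μi i a = 1)
    (A : Finset V) (f : (V → Fin q) → ℝ) (τ : V → Fin q) :
    entA (prodWeight μi) A f τ = condEnt μi A f τ := by
  rw [entA, ent, sum_condMeas_mul hpos h1, sum_condMeas_mul hpos h1, condEnt_eq_condMean]

end ConditionalMeasure

theorem productShearer_general [Nonempty V]
    (μi : V → Fin q → ℝ) (hpos : ∀ i a, 0 < μi i a) (h1 : ∀ i, ∑ a, μi i a = 1)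
    (α : Finset V → ℝ) (hα : ∀ A, 0 ≤ α A)
    (f : (V → Fin q) → ℝ) (hf : ∀ σ, 0 ≤ f σ) :
    gam α * ent (fun σ => ∏ i, μi i (σ i)) f ≤
      ∑ A : Finset V, α A *
        ∑ τ, (∏ i, μi i (τ i)) * entA (fun σ => ∏ i, μi i (σ i)) A f τ := by
  have hμ : ∀ i a, 0 ≤ μi i a := fun i a => (hpos i a).le
  let r : V → ℕ := fun i => Fintype.equivFin V i
  have hr : Function.Injective r := Fin.val_injective.comp (Fintype.equivFin V).injective
  have hγ : ∀ i, gam α ≤ ∑ A ∈ univ.filter (fun A => i ∈ A), α A := fun i =>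
    ciInf_le (Set.finite_range _).bddBelow i
  calc gam α * ent (prodWeight μi) f = ∑ i, gam α * chainTerm μi r f i := by
        rw [← mul_sum, sum_chainTerm h1 hr]
    _ ≤ ∑ i, (∑ A ∈ univ.filter (fun A => i ∈ A), α A) * chainTerm μi r f i :=
        sum_le_sum fun i _ => mul_le_mul_of_nonneg_right (hγ i) (chainTerm_nonneg hμ h1 hf i)
    _ = ∑ A, α A * ∑ i ∈ A, chainTerm μi r f i := sum_sum_filter_mem_mul α _
    _ ≤ ∑ A, α A * prodMean μi (condEnt μi A f) :=
        sum_le_sum fun A _ => mul_le_mul_of_nonneg_left (sum_chainTerm_le hμ h1 hr hf A) (hα A)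
    _ = _ := by simp only [prodMean, ← entA_prodWeight hpos h1]; rfl

/-- Product measures satisfy the Shearer entropy inequality with constant 1:
`γ(α) Ent_μ f ≤ Σ_A α_A μ(Ent_A f)`. -/
theorem productShearer [Nonempty V]
    (μi : V → Fin q → ℝ) (hpos : ∀ i a, 0 < μi i a) (h1 : ∀ i, ∑ a, μi i a = 1)
    (α : Finset V → ℝ) (hα : ∀ A, 0 ≤ α A) (hα1 : ∑ A : Finset V, α A = 1)
    (f : (V → Fin q) → ℝ) (hf : ∀ σ, 0 ≤ f σ) :
    gam α * ent (fun σ => ∏ i, μi i (σ i)) f ≤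
      ∑ A : Finset V, α A *
        ∑ τ, (∏ i, μi i (τ i)) * entA (fun σ => ∏ i, μi i (σ i)) A f τ :=
  productShearer_general μi hpos h1 α hα f hf
end
end

section
/- Let ν be a probability measure on Ω_0 ⊂ {0,1}^{qn}, where each configuration η consists of n blocks η^i ∈ {0,1}^q with exactly one 1 per block. Then the maximum eigenvalue of the covariance matrix Cov[ν](i,a;j,b) = ν(η^i_a η^j_b) − ν(η^i_a)ν(η^j_b) is at most n/2. -/
open Finset Matrix
open scoped Classical

noncomputable section

/-- Covariance matrix of the one-hot encoding `η^i_a = 1{σ i = a}` of a measure on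
`[q]^n`. -/
def covMat (n q : ℕ) (ν : (Fin n → Fin q) → ℝ) :
    Matrix (Fin n × Fin q) (Fin n × Fin q) ℝ :=
  fun p p' =>
    (∑ σ, ν σ * ((if σ p.1 = p.2 then (1 : ℝ) else 0) *
        (if σ p'.1 = p'.2 then (1 : ℝ) else 0))) -
      (∑ σ, ν σ * (if σ p.1 = p.2 then (1 : ℝ) else 0)) *
        (∑ σ, ν σ * (if σ p'.1 = p'.2 then (1 : ℝ) else 0))

lemma covMat_symm (n q : ℕ) (ν : (Fin n → Fin q) → ℝ) (x y : Fin n × Fin q) :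
    covMat n q ν x y = covMat n q ν y x := by
  unfold covMat
  congr 1
  · exact Finset.sum_congr rfl fun σ _ => by ring
  · ring

lemma rowBound (n q : ℕ) (ν : (Fin n → Fin q) → ℝ)
    (hν : ∀ σ, 0 ≤ ν σ) (hν1 : ∑ σ, ν σ = 1) (i : Fin n) (a : Fin q) (j : Fin n) :
    ∑ b, |covMat n q ν (i, a) (j, b)| ≤ 1 / 2 := by
  set p : ℝ := ∑ σ, ν σ * (if σ i = a then (1:ℝ) else 0) with hp
  have hterm : ∀ σ, 0 ≤ ν σ * (if σ i = a then (1:ℝ) else 0) := by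
    intro σ; have := hν σ; split <;> simp [this]
  have hp0 : 0 ≤ p := Finset.sum_nonneg fun σ _ => hterm σ
  have hp1 : p ≤ 1 := by
    have h : p ≤ ∑ σ, ν σ := by
      refine Finset.sum_le_sum fun σ _ => ?_
      split
      · simp
      · simpa using hν σ
    rw [hν1] at h; exact h
  have key : ∀ b, covMat n q ν (i, a) (j, b)
      = ∑ σ, ν σ * (((if σ i = a then (1:ℝ) else 0) - p) * (if σ j = b then 1 else 0)) := by
    intro b
    have h1 : ∀ σ, ν σ * (((if σ i = a then (1:ℝ) else 0) - p) * (if σ j = b then 1 else 0))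
        = ν σ * ((if σ i = a then (1:ℝ) else 0) * (if σ j = b then 1 else 0))
          - p * (ν σ * (if σ j = b then (1:ℝ) else 0)) := fun σ => by ring
    rw [Finset.sum_congr rfl fun σ _ => h1 σ, Finset.sum_sub_distrib, ← Finset.mul_sum]
    unfold covMat
    rw [hp]
  have step1 : ∑ b, |covMat n q ν (i, a) (j, b)|
      ≤ ∑ b, ∑ σ, ν σ * |(if σ i = a then (1:ℝ) else 0) - p| * (if σ j = b then 1 else 0) := by
    refine Finset.sum_le_sum fun b _ => ?_
    rw [key b]
    refine (Finset.abs_sum_le_sum_abs _ _).trans (le_of_eq (Finset.sum_congr rfl fun σ _ => ?_))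
    rw [abs_mul, abs_mul, abs_of_nonneg (hν σ),
      show |(if σ j = b then (1:ℝ) else 0)| = (if σ j = b then (1:ℝ) else 0) from by
        split <;> simp, mul_assoc]
  have step2 : ∑ b, ∑ σ, ν σ * |(if σ i = a then (1:ℝ) else 0) - p| * (if σ j = b then 1 else 0)
      = ∑ σ, ν σ * |(if σ i = a then (1:ℝ) else 0) - p| := by
    rw [Finset.sum_comm]
    refine Finset.sum_congr rfl fun σ _ => ?_
    rw [← Finset.mul_sum]
    simp
  have habs : ∀ σ : Fin n → Fin q, |(if σ i = a then (1:ℝ) else 0) - p|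
      = (if σ i = a then (1:ℝ) else 0) * (1 - 2 * p) + p := by
    intro σ
    split
    · rw [abs_of_nonneg (by linarith : (0:ℝ) ≤ 1 - p)]; ring
    · rw [abs_of_nonpos (by linarith : (0:ℝ) - p ≤ 0)]; ring
  have step3 : ∑ σ, ν σ * |(if σ i = a then (1:ℝ) else 0) - p| = p * (1 - 2 * p) + p := by
    calc ∑ σ, ν σ * |(if σ i = a then (1:ℝ) else 0) - p|
        = ∑ σ, (ν σ * (if σ i = a then (1:ℝ) else 0) * (1 - 2 * p) + ν σ * p) := by
          refine Finset.sum_congr rfl fun σ _ => ?_; rw [habs σ]; ring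
      _ = (∑ σ, ν σ * (if σ i = a then (1:ℝ) else 0)) * (1 - 2 * p) + (∑ σ, ν σ) * p := by
          rw [Finset.sum_add_distrib, ← Finset.sum_mul, ← Finset.sum_mul]
      _ = p * (1 - 2 * p) + p := by rw [← hp, hν1]; ring
  have : ∑ b, |covMat n q ν (i, a) (j, b)| ≤ p * (1 - 2 * p) + p := by
    rw [← step3, ← step2]; exact step1
  nlinarith [this, sq_nonneg (p - 1/2)]

/-- For any probability measure `ν` on one-hot block configurations, the maximum
eigenvalue of its covariance matrix is at most `n/2`. -/
theorem covarianceTrivialBound (n q : ℕ) (ν : (Fin n → Fin q) → ℝ)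
    (hν : ∀ σ, 0 ≤ ν σ) (hν1 : ∑ σ, ν σ = 1) :
    ∀ u : Fin n × Fin q → ℝ,
      u ⬝ᵥ (covMat n q ν) *ᵥ u ≤ ((n : ℝ) / 2) * (u ⬝ᵥ u) := by
  intro u
  set C := covMat n q ν with hC
  have hrow : ∀ x : Fin n × Fin q, ∑ y, |C x y| ≤ (n : ℝ) / 2 := by
    intro x
    rw [Fintype.sum_prod_type]
    calc ∑ j, ∑ b, |C x (j, b)| ≤ ∑ j : Fin n, (1 / 2 : ℝ) := by
          refine Finset.sum_le_sum fun j _ => ?_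
          simpa using rowBound n q ν hν hν1 x.1 x.2 j
      _ = (n : ℝ) / 2 := by simp; ring
  calc u ⬝ᵥ C *ᵥ u = ∑ x, ∑ y, u x * (C x y * u y) := by
        simp [dotProduct, mulVec, Finset.mul_sum]
    _ ≤ ∑ x, ∑ y, (|C x y| * (u x)^2 / 2 + |C x y| * (u y)^2 / 2) := by
        refine Finset.sum_le_sum fun x _ => Finset.sum_le_sum fun y _ => ?_
        have h1 : u x * (C x y * u y) ≤ |C x y| * (|u x| * |u y|) := by
          calc u x * (C x y * u y) ≤ |u x * (C x y * u y)| := le_abs_self _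
            _ = |C x y| * (|u x| * |u y|) := by rw [abs_mul, abs_mul]; ring
        have h2 : |u x| * |u y| ≤ ((u x)^2 + (u y)^2) / 2 := by
          nlinarith [sq_nonneg (|u x| - |u y|), sq_abs (u x), sq_abs (u y)]
        nlinarith [abs_nonneg (C x y)]
    _ = (∑ x, (∑ y, |C x y|) * (u x)^2 / 2) + (∑ x, ∑ y, |C x y| * (u y)^2 / 2) := by
        rw [← Finset.sum_add_distrib]
        refine Finset.sum_congr rfl fun x _ => ?_
        rw [Finset.sum_add_distrib]
        congr 1
        rw [Finset.sum_mul, Finset.sum_div]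
    _ = (∑ x, (∑ y, |C x y|) * (u x)^2 / 2) + (∑ y, (∑ x, |C y x|) * (u y)^2 / 2) := by
        congr 1
        rw [Finset.sum_comm]
        refine Finset.sum_congr rfl fun y _ => ?_
        rw [Finset.sum_mul, Finset.sum_div]
        refine Finset.sum_congr rfl fun x _ => ?_
        rw [hC, covMat_symm n q ν x y]
    _ ≤ ((n : ℝ) / 2) * (u ⬝ᵥ u) := by
        have hb : ∀ x, (∑ y, |C x y|) * (u x)^2 / 2 ≤ ((n : ℝ) / 2) * (u x)^2 / 2 := by
          intro x
          have := hrow x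
          have h2 : (0:ℝ) ≤ (u x)^2 := sq_nonneg _
          nlinarith
        calc (∑ x, (∑ y, |C x y|) * (u x)^2 / 2) + (∑ y, (∑ x, |C y x|) * (u y)^2 / 2)
            ≤ (∑ x, ((n : ℝ) / 2) * (u x)^2 / 2) + (∑ x, ((n : ℝ) / 2) * (u x)^2 / 2) := by
              exact add_le_add (Finset.sum_le_sum fun x _ => hb x)
                (Finset.sum_le_sum fun x _ => hb x)
          _ = ((n : ℝ) / 2) * (u ⬝ᵥ u) := by
              rw [← Finset.sum_add_distrib]
              simp only [dotProduct, Finset.mul_sum]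
              refine Finset.sum_congr rfl fun x _ => ?_
              rw [sq]; ring
end
end
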